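/- arXiv:1903.07095 — 3 statements merged into one kernel-verified Lean document; each statement's English description precedes it below -/
import Mathlib

section
/- Let N ≥ 3 be an integer, r ≥ 1, ξ : {1, ..., r+1} → ℂ \ {0}, and let ≺ be the relation defined by: t ≺ t' iff m(ξ(t')·ξ(t)⁻¹) ≡ m(ξ(t')) - m(ξ(t)) (mod N) and (m(ξ(t')·ξ(t)⁻¹) + m(ξ(t)·ξ(t')⁻¹) ≡ 1 (mod N) or t' < t). If t ≺ t', then (ξ(t)·ξ(t')⁻¹)·Å_{1+m(ξ(t))} ⊆ S_{m(ξ(t'))}, where Å_s := exp(2πis/N)·{z ∈ ℂ \ {0} : arg(z) ∈ (-π/(2N), π/(2N))} and S_s := exp(2πis/N)·{z ∈ ℂ \ {0} : arg(z) ∈ [-π/(2N), 5π/(2N))}. -/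
/-- The principal argument of a nonzero complex number, normalized to lie in `[-π, π)`. -/
noncomputable def parg (z : ℂ) : ℝ :=
  if Complex.arg z = Real.pi then -Real.pi else Complex.arg z

/-- `m(z) := ⌈-N·arg(z)/(2π)⌉` where `arg(z) ∈ [-π, π)`. -/
noncomputable def mfun (N : ℤ) (z : ℂ) : ℤ :=
  ⌈(-(N : ℝ) * parg z) / (2 * Real.pi)⌉

/-- The rotation `exp(2πis/N)`. -/
noncomputable def rot (N s : ℤ) : ℂ :=
  Complex.exp (2 * Real.pi * Complex.I * (s : ℂ) / (N : ℂ))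

/-- The sector `S_s := exp(2πis/N)·{z ≠ 0 : arg z ∈ [-π/(2N), 5π/(2N))}`. -/
noncomputable def Ssec (N s : ℤ) : Set ℂ :=
  (fun w => rot N s * w) ''
    {z | z ≠ 0 ∧ parg z ∈ Set.Ico (-(Real.pi / (2 * (N : ℝ)))) (5 * Real.pi / (2 * (N : ℝ)))}

/-- The open arm `Å_s := exp(2πis/N)·{z ≠ 0 : arg z ∈ (-π/(2N), π/(2N))}`. -/
noncomputable def Aop (N s : ℤ) : Set ℂ :=
  (fun w => rot N s * w) ''
    {z | z ≠ 0 ∧ parg z ∈ Set.Ioo (-(Real.pi / (2 * (N : ℝ)))) (Real.pi / (2 * (N : ℝ)))}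

/-- `t ≺ t'` iff `m(ξ(t')·ξ(t)⁻¹) ≡ m(ξ(t')) - m(ξ(t)) (mod N)` and, in addition,
`m(ξ(t')·ξ(t)⁻¹) + m(ξ(t)·ξ(t')⁻¹) ≡ 1 (mod N)` or `t' < t`. -/
def prec (N : ℤ) (ξ : ℕ → ℂ) (t t' : ℕ) : Prop :=
  mfun N (ξ t' * (ξ t)⁻¹) ≡ mfun N (ξ t') - mfun N (ξ t) [ZMOD N] ∧
  (mfun N (ξ t' * (ξ t)⁻¹) + mfun N (ξ t * (ξ t')⁻¹) ≡ 1 [ZMOD N] ∨ t' < t)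

/-! Put `u = ξ t' * (ξ t)⁻¹` and `k = m(u)`. The ceiling in `m` places `arg u` in
`[-2πk/N, 2π(1-k)/N)`, so `u⁻¹ · exp(2πi(1-k)/N)` has argument in `(0, 2π/N]`. The first
condition of `t ≺ t'` makes `1 + m(ξ t) - m(ξ t') ≡ 1 - k`, whence
`(ξ t / ξ t') · exp(2πi(1 + m(ξ t))/N) · z = exp(2πi m(ξ t')/N) · (u⁻¹ · exp(2πi(1-k)/N) · z)`
for every `z`.
For `|arg z| < π/(2N)` the last factor has argument in `(-π/(2N), 5π/(2N))`; as `N ≥ 3` this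
interval lies in `(-π, π)`, so arguments add without wrapping around. -/

open Complex Real Set

lemma parg_of_arg_ne_pi {z : ℂ} (h : arg z ≠ π) : parg z = arg z := if_neg h

lemma coe_parg (z : ℂ) : (parg z : Real.Angle) = arg z := by
  unfold parg
  split_ifs with h
  · rw [h, Real.Angle.coe_neg, Real.Angle.neg_coe_pi]
  · rfl

lemma parg_eq_of_coe_eq {z : ℂ} {φ : ℝ} (h : (parg z : Real.Angle) = φ)
    (hφ : φ ∈ Ioo (-π) π) : parg z = φ := by
  rw [coe_parg, arg_coe_angle_eq_iff_eq_toReal,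
    Real.Angle.toReal_coe_eq_self_iff_mem_Ioc.mpr (Ioo_subset_Ioc_self hφ)] at h
  rw [parg_of_arg_ne_pi (h ▸ hφ.2.ne), h]

lemma rot_ne_zero (N s : ℤ) : rot N s ≠ 0 := Complex.exp_ne_zero _

lemma rot_add (N s u : ℤ) : rot N (s + u) = rot N s * rot N u := by
  unfold rot
  rw [← Complex.exp_add]
  push_cast
  ring_nf

lemma rot_mul_self (N c : ℤ) : rot N (N * c) = 1 := by
  rcases eq_or_ne N 0 with rfl | hN
  · simp [rot]
  · unfold rot
    convert Complex.exp_int_mul_two_pi_mul_I c using 2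
    push_cast
    field_simp

lemma rot_eq_rot_of_modEq {N s u : ℤ} (h : s ≡ u [ZMOD N]) : rot N s = rot N u := by
  obtain ⟨c, hc⟩ := h.dvd
  rw [show u = s + N * c by omega, rot_add, rot_mul_self, mul_one]

lemma coe_arg_rot (N s : ℤ) : (arg (rot N s) : Real.Angle) = (2 * π * s / N : ℝ) := by
  have : rot N s = Complex.exp ((2 * π * s / N : ℝ) * I) := by
    unfold rot; push_cast; ring_nf
  rw [this, arg_coe_angle_eq_iff_eq_toReal, Real.Angle.toReal_coe, arg_exp_mul_I]

lemma mfun_angle_mem_Ioc {N : ℤ} (hN : 0 < N) (z : ℂ) :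
    2 * π * (1 - mfun N z) / N - parg z ∈ Ioc 0 (2 * π / N) := by
  have hN' : (0 : ℝ) < N := by exact_mod_cast hN
  obtain ⟨hlt, hle⟩ := Int.ceil_eq_iff.mp (rfl : mfun N z = _)
  rw [lt_div_iff₀ (by positivity)] at hlt
  rw [div_le_iff₀ (by positivity)] at hle
  have hdecomp : 2 * π * (1 - mfun N z) / N - parg z =
      2 * π / N - (2 * π * mfun N z + N * parg z) / N := by
    field_simp
    ring
  rw [hdecomp, mem_Ioc, sub_pos, sub_le_self_iff, div_lt_div_iff_of_pos_right hN']
  constructor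
  · linarith
  · exact div_nonneg (by linarith) hN'.le

lemma parg_inv_mul_rot_mul_mem_Ico {N : ℤ} (hN : 3 ≤ N) {u z : ℂ} (hu : u ≠ 0)
    (hz : z ≠ 0) (hzarg : parg z ∈ Ioo (-(π / (2 * N))) (π / (2 * N))) :
    parg (u⁻¹ * rot N (1 - mfun N u) * z) ∈ Ico (-(π / (2 * N))) (5 * π / (2 * N)) := by
  have hN' : (3 : ℝ) ≤ N := by exact_mod_cast hN
  obtain ⟨hφ₀, hφ₁⟩ := mfun_angle_mem_Ioc (N := N) (by omega) u
  set φ := 2 * π * (1 - mfun N u) / N - parg u + parg z with hφ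
  have hcoe : (parg (u⁻¹ * rot N (1 - mfun N u) * z) : Real.Angle) = φ := by
    rw [coe_parg, arg_mul_coe_angle (by simp [hu, rot_ne_zero]) hz,
      arg_mul_coe_angle (inv_ne_zero hu) (rot_ne_zero _ _), arg_inv_coe_angle, coe_arg_rot,
      ← coe_parg, ← coe_parg, hφ, Real.Angle.coe_add, Real.Angle.coe_sub, Int.cast_sub,
      Int.cast_one]
    abel
  have hφ_mem : φ ∈ Ioo (-(π / (2 * N))) (5 * π / (2 * N)) := by
    have : 2 * π / N + π / (2 * N) = 5 * π / (2 * N) := by field_simp; ring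
    constructor <;> linarith [hzarg.1, hzarg.2]
  have hsector : Ioo (-(π / (2 * N))) (5 * π / (2 * N)) ⊆ Ioo (-π) π := by
    have hpos : (0 : ℝ) < 2 * N := by positivity
    apply Ioo_subset_Ioo
    · rw [neg_le_neg_iff, div_le_iff₀ hpos]
      nlinarith [pi_pos]
    · rw [div_le_iff₀ hpos]
      nlinarith [pi_pos]
  rw [parg_eq_of_coe_eq hcoe (hsector hφ_mem)]
  exact Ioo_subset_Ico_self hφ_mem

theorem stmt8_general (N : ℤ) (hN : 3 ≤ N) (r : ℕ) (ξ : ℕ → ℂ)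
    (hξ : ∀ s ∈ Finset.Icc 1 (r + 1), ξ s ≠ 0)
    (t t' : ℕ) (ht : t ∈ Finset.Icc 1 (r + 1)) (ht' : t' ∈ Finset.Icc 1 (r + 1))
    (h : prec N ξ t t') :
    (fun w => (ξ t * (ξ t')⁻¹) * w) '' Aop N (1 + mfun N (ξ t)) ⊆ Ssec N (mfun N (ξ t')) := by
  set u := ξ t' * (ξ t)⁻¹ with hu_def
  have hu : u ≠ 0 := mul_ne_zero (hξ t' ht') (inv_ne_zero (hξ t ht))
  have hrot : rot N (1 - mfun N u) = rot N (1 + mfun N (ξ t) - mfun N (ξ t')) :=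
    rot_eq_rot_of_modEq (by simpa only [sub_sub_eq_add_sub] using h.1.sub_left 1)
  rintro _ ⟨_, ⟨z, ⟨hz, hzarg⟩, rfl⟩, rfl⟩
  refine ⟨u⁻¹ * rot N (1 - mfun N u) * z,
    ⟨by simp [hu, hz, rot_ne_zero], parg_inv_mul_rot_mul_mem_Ico hN hu hz hzarg⟩, ?_⟩
  have hsplit : rot N (1 + mfun N (ξ t)) =
      rot N (1 + mfun N (ξ t) - mfun N (ξ t')) * rot N (mfun N (ξ t')) := by
    rw [← rot_add, sub_add_cancel]
  dsimp only
  rw [hrot, hsplit, hu_def, mul_inv, inv_inv]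
  ring

theorem stmt8 (N : ℤ) (hN : 3 ≤ N) (r : ℕ) (hr : 1 ≤ r) (ξ : ℕ → ℂ)
    (hξ : ∀ s ∈ Finset.Icc 1 (r + 1), ξ s ≠ 0)
    (t t' : ℕ) (ht : t ∈ Finset.Icc 1 (r + 1)) (ht' : t' ∈ Finset.Icc 1 (r + 1))
    (h : prec N ξ t t') :
    (fun w => (ξ t * (ξ t')⁻¹) * w) '' Aop N (1 + mfun N (ξ t)) ⊆ Ssec N (mfun N (ξ t')) :=
  stmt8_general N hN r ξ hξ t t' ht ht' h
end

section
/- Let N ≥ 3, r ≥ 1, and fix nonzero complex numbers z_1, ..., z_r. For a permutation σ of {1,...,r} and 1 ≤ t ≤ r+1, set f_{t,σ} := ∏_{j=1}^{t-1} z_{σ(j)} (empty product = 1) and ξ_σ(t) := f_{t,σ}·f_{r+1,σ}⁻¹; let ≺_σ be the order on {1,...,r+1} defined from ξ_σ. Define the permutation σ̃ by σ̃(1) := σ(r) and σ̃(j) := σ(j-1) for 2 ≤ j ≤ r, and let B_σ := {1 ≤ t ≤ r+1 : m(z_{σ(r)}·ξ_σ(t)) ≡ m(z_{σ(r)}) +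 m(ξ_σ(t)) (mod N)}. Then for all t, t' ∈ {1,...,r} with t ∈ B_σ and t' ∉ B_σ, one has t ≺_σ t' and t'+1 ≺_{σ̃} t+1. -/
/-- `f_{t,s} := ∏_{j=1}^{t-1} z_{s(j)}` (empty product for `t = 1`). -/
def fprod (z : ℕ → ℂ) (s : ℕ → ℕ) (t : ℕ) : ℂ :=
  ∏ j ∈ Finset.Icc 1 (t - 1), z (s j)

/-- `ξ_s(t) := f_{t,s}·f_{r+1,s}⁻¹`. -/
noncomputable def xi (r : ℕ) (z : ℕ → ℂ) (s : ℕ → ℕ) (t : ℕ) : ℂ :=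
  fprod z s t * (fprod z s (r + 1))⁻¹

/-- `t ∈ B_σ` iff `m(z_{σ(r)}·ξ_σ(t)) ≡ m(z_{σ(r)}) + m(ξ_σ(t)) (mod N)`. -/
def Bmem (N : ℤ) (r : ℕ) (z : ℕ → ℂ) (σ : ℕ → ℕ) (t : ℕ) : Prop :=
  mfun N (z (σ r) * xi r z σ t) ≡ mfun N (z (σ r)) + mfun N (xi r z σ t) [ZMOD N]

namespace Int

variable {R : Type*} [CommRing R] [LinearOrder R] [IsStrictOrderedRing R] [FloorRing R] {a b : R}

theorem floor_add_of_fract_add_fract_lt_one (h : fract a + fract b < 1) :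
    ⌊a + b⌋ = ⌊a⌋ + ⌊b⌋ := by
  rw [floor_eq_iff]
  push_cast
  constructor <;> linarith [floor_add_fract a, floor_add_fract b, fract_nonneg a, fract_nonneg b]

theorem floor_add_of_one_le_fract_add_fract (h : 1 ≤ fract a + fract b) :
    ⌊a + b⌋ = ⌊a⌋ + ⌊b⌋ + 1 := by
  rw [floor_eq_iff]
  push_cast
  constructor <;> linarith [floor_add_fract a, floor_add_fract b, fract_lt_one a, fract_lt_one b]

theorem floor_sub_of_fract_le (h : fract b ≤ fract a) : ⌊a - b⌋ = ⌊a⌋ - ⌊b⌋ := by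
  rw [floor_eq_iff]
  push_cast
  constructor <;> linarith [floor_add_fract a, floor_add_fract b, fract_lt_one a, fract_nonneg b]

theorem floor_sub_of_fract_lt (h : fract a < fract b) : ⌊a - b⌋ = ⌊a⌋ - ⌊b⌋ - 1 := by
  rw [floor_eq_iff]
  push_cast
  constructor <;> linarith [floor_add_fract a, floor_add_fract b, fract_nonneg a, fract_lt_one b]

theorem fract_add_of_fract_add_fract_lt_one (h : fract a + fract b < 1) :
    fract (a + b) = fract a + fract b := by
  rw [fract, floor_add_of_fract_add_fract_lt_one h, fract, fract]
  push_cast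
  ring

theorem fract_add_of_one_le_fract_add_fract (h : 1 ≤ fract a + fract b) :
    fract (a + b) = fract a + fract b - 1 := by
  rw [fract, floor_add_of_one_le_fract_add_fract h, fract, fract]
  push_cast
  ring

end Int

theorem parg_coe_angle (z : ℂ) : (parg z : Real.Angle) = z.arg := by
  unfold parg
  split_ifs with h
  · rw [h, Real.Angle.coe_neg, Real.Angle.neg_coe_pi]
  · rfl

noncomputable def scaledArg (N : ℤ) (z : ℂ) : ℝ :=
  N * parg z / (2 * Real.pi)

section scaledArg

variable {N : ℤ} {u v w : ℂ}

theorem mfun_eq_neg_floor_scaledArg (N : ℤ) (z : ℂ) : mfun N z = -⌊scaledArg N z⌋ := by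
  rw [mfun, neg_mul, neg_div, Int.ceil_neg, scaledArg]

theorem exists_scaledArg_eq {x : ℝ} (h : (w.arg : Real.Angle) = x) :
    ∃ k : ℤ, scaledArg N w = N * x / (2 * Real.pi) + N * k := by
  rw [← parg_coe_angle, Real.Angle.angle_eq_iff_two_pi_dvd_sub] at h
  obtain ⟨k, hk⟩ := h
  refine ⟨k, ?_⟩
  rw [scaledArg, show parg w = x + 2 * Real.pi * k by linarith]
  field_simp

theorem exists_scaledArg_mul (hu : u ≠ 0) (hv : v ≠ 0) :
    ∃ k : ℤ, scaledArg N (u * v) = scaledArg N u + scaledArg N v + N * k := by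
  have h : ((u * v).arg : Real.Angle) = ((parg u + parg v : ℝ) : Real.Angle) := by
    rw [Complex.arg_mul_coe_angle hu hv, Real.Angle.coe_add, parg_coe_angle, parg_coe_angle]
  obtain ⟨k, hk⟩ := exists_scaledArg_eq (N := N) h
  exact ⟨k, by rw [hk, scaledArg, scaledArg]; ring⟩

theorem exists_scaledArg_mul_inv (hu : u ≠ 0) (hv : v ≠ 0) :
    ∃ k : ℤ, scaledArg N (v * u⁻¹) = scaledArg N v - scaledArg N u + N * k := by
  have h : ((v * u⁻¹).arg : Real.Angle) = ((parg v - parg u : ℝ) : Real.Angle) := by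
    rw [Complex.arg_mul_coe_angle hv (inv_ne_zero hu), Complex.arg_inv_coe_angle,
      Real.Angle.coe_sub, parg_coe_angle, parg_coe_angle, sub_eq_add_neg]
  obtain ⟨k, hk⟩ := exists_scaledArg_eq (N := N) h
  exact ⟨k, by rw [hk, scaledArg, scaledArg]; ring⟩

theorem mfun_modEq_neg_floor {x : ℝ} {k : ℤ} (h : scaledArg N w = x + N * k) :
    mfun N w ≡ -⌊x⌋ [ZMOD N] := by
  rw [mfun_eq_neg_floor_scaledArg, h, show x + N * k = x + ((N * k : ℤ) : ℝ) by push_cast; rfl,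
    Int.floor_add_intCast]
  exact Int.modEq_iff_dvd.2 ⟨k, by ring⟩

theorem fract_scaledArg_mul (hu : u ≠ 0) (hv : v ≠ 0) :
    Int.fract (scaledArg N (u * v)) = Int.fract (scaledArg N u + scaledArg N v) := by
  obtain ⟨k, hk⟩ := exists_scaledArg_mul (N := N) hu hv
  rw [hk, show (N : ℝ) * k = ((N * k : ℤ) : ℝ) by push_cast; rfl, Int.fract_add_intCast]

theorem mfun_mul_modEq_add_iff (hN : 2 ≤ N) (hu : u ≠ 0) (hv : v ≠ 0) :
    mfun N (u * v) ≡ mfun N u + mfun N v [ZMOD N] ↔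
      Int.fract (scaledArg N u) + Int.fract (scaledArg N v) < 1 := by
  obtain ⟨k, hk⟩ := exists_scaledArg_mul (N := N) hu hv
  have hmul := mfun_modEq_neg_floor hk
  simp only [mfun_eq_neg_floor_scaledArg] at hmul ⊢
  constructor
  · intro h
    by_contra! hle
    rw [Int.floor_add_of_one_le_fract_add_fract hle] at hmul
    have hdvd : N ∣ 1 := by
      convert (hmul.symm.trans h).dvd using 1
      ring
    exact absurd (Int.le_of_dvd one_pos hdvd) (by omega)
  · intro hlt
    rw [Int.floor_add_of_fract_add_fract_lt_one hlt] at hmul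
    exact hmul.trans (by rw [neg_add])

theorem prec_of_fract_scaledArg_lt {ξ : ℕ → ℂ} {t t' : ℕ} (h0 : ξ t ≠ 0) (h0' : ξ t' ≠ 0)
    (h : Int.fract (scaledArg N (ξ t)) < Int.fract (scaledArg N (ξ t'))) :
    prec N ξ t t' := by
  obtain ⟨k, hk⟩ := exists_scaledArg_mul_inv (N := N) h0 h0'
  obtain ⟨k', hk'⟩ := exists_scaledArg_mul_inv (N := N) h0' h0
  have h1 := mfun_modEq_neg_floor hk
  have h2 := mfun_modEq_neg_floor hk'
  rw [Int.floor_sub_of_fract_le h.le] at h1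
  rw [Int.floor_sub_of_fract_lt h] at h2
  refine ⟨?_, Or.inl ?_⟩
  · rw [mfun_eq_neg_floor_scaledArg N (ξ t'), mfun_eq_neg_floor_scaledArg N (ξ t)]
    convert h1 using 1
    ring
  · convert h1.add h2 using 1
    ring

theorem fract_scaledArg_lt_of_mfun_mul (hN : 2 ≤ N) (hw : w ≠ 0) (hu : u ≠ 0) (hv : v ≠ 0)
    (hu' : mfun N (w * u) ≡ mfun N w + mfun N u [ZMOD N])
    (hv' : ¬ mfun N (w * v) ≡ mfun N w + mfun N v [ZMOD N]) :
    Int.fract (scaledArg N u) < Int.fract (scaledArg N v) ∧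
      Int.fract (scaledArg N (w * v)) < Int.fract (scaledArg N (w * u)) := by
  have hwu := (mfun_mul_modEq_add_iff hN hw hu).1 hu'
  have hwv := not_lt.1 (mt (mfun_mul_modEq_add_iff hN hw hv).2 hv')
  refine ⟨by linarith, ?_⟩
  rw [fract_scaledArg_mul hw hu, fract_scaledArg_mul hw hv,
    Int.fract_add_of_fract_add_fract_lt_one hwu, Int.fract_add_of_one_le_fract_add_fract hwv]
  linarith [Int.fract_lt_one (scaledArg N v), Int.fract_nonneg (scaledArg N u)]

end scaledArg

section fprod

variable {z : ℕ → ℂ} {σ σt : ℕ → ℕ} {r : ℕ}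

theorem fprod_add_one {t : ℕ} (ht : 1 ≤ t) : fprod z σ (t + 1) = fprod z σ t * z (σ t) := by
  obtain ⟨n, rfl⟩ := Nat.exists_eq_add_of_le' ht
  simp only [fprod, Nat.add_sub_cancel]
  exact Finset.prod_Icc_succ_top (by omega) _

theorem xi_ne_zero (hz : ∀ j ∈ Finset.Icc 1 r, z (σ j) ≠ 0) {t : ℕ} (ht : t ≤ r + 1) :
    xi r z σ t ≠ 0 := by
  have hf : ∀ s ≤ r + 1, fprod z σ s ≠ 0 := fun s hs =>
    Finset.prod_ne_zero_iff.2 fun j hj => hz j (by simp only [Finset.mem_Icc] at hj ⊢; omega)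
  exact mul_ne_zero (hf t ht) (inv_ne_zero (hf (r + 1) le_rfl))

theorem fprod_rotate (h1 : σt 1 = σ r) (hj : ∀ j, 2 ≤ j → j ≤ r → σt j = σ (j - 1))
    {s : ℕ} (hs : 1 ≤ s) (hsr : s ≤ r) :
    fprod z σt (s + 1) = z (σ r) * fprod z σ s := by
  induction s, hs using Nat.le_induction with
  | base => simp [fprod, h1]
  | succ s hs ih =>
    rw [fprod_add_one (by omega), ih (by omega), hj (s + 1) (by omega) hsr, Nat.add_sub_cancel,
      fprod_add_one hs, mul_assoc]

theorem xi_rotate (h1 : σt 1 = σ r) (hj : ∀ j, 2 ≤ j → j ≤ r → σt j = σ (j - 1))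
    (hr : 1 ≤ r) : ∀ s ∈ Finset.Icc 1 r, xi r z σt (s + 1) = z (σ r) * xi r z σ s := by
  intro s hs
  obtain ⟨hs1, hsr⟩ := Finset.mem_Icc.1 hs
  rw [xi, xi, fprod_rotate h1 hj hs1 hsr, fprod_rotate h1 hj hr le_rfl, fprod_add_one hr,
    mul_inv, mul_inv]
  ring

end fprod

theorem stmt10 (N : ℤ) (hN : 3 ≤ N) (r : ℕ) (hr : 1 ≤ r)
    (z : ℕ → ℂ) (hz : ∀ j ∈ Finset.Icc 1 r, z j ≠ 0)
    (σ : ℕ → ℕ) (hσ : Set.BijOn σ (Set.Icc 1 r) (Set.Icc 1 r))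
    (σt : ℕ → ℕ) (hσt1 : σt 1 = σ r) (hσtj : ∀ j, 2 ≤ j → j ≤ r → σt j = σ (j - 1))
    (t t' : ℕ) (ht : t ∈ Finset.Icc 1 r) (ht' : t' ∈ Finset.Icc 1 r)
    (hBt : Bmem N r z σ t) (hBt' : ¬ Bmem N r z σ t') :
    prec N (xi r z σ) t t' ∧ prec N (xi r z σt) (t' + 1) (t + 1) := by
  have hzσ : ∀ j ∈ Finset.Icc 1 r, z (σ j) ≠ 0 := fun j hj =>
    hz _ (by simpa using hσ.mapsTo (by simpa using hj))
  have hw : z (σ r) ≠ 0 := hzσ r (Finset.mem_Icc.2 ⟨hr, le_rfl⟩)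
  have hξt := xi_ne_zero hzσ (t := t) ((Finset.mem_Icc.1 ht).2.trans r.le_succ)
  have hξt' := xi_ne_zero hzσ (t := t') ((Finset.mem_Icc.1 ht').2.trans r.le_succ)
  have hrot := xi_rotate (z := z) hσt1 hσtj hr
  obtain ⟨hlt, hlt_rot⟩ := fract_scaledArg_lt_of_mfun_mul (by omega) hw hξt hξt' hBt hBt'
  rw [← hrot t ht, ← hrot t' ht'] at hlt_rot
  refine ⟨prec_of_fract_scaledArg_lt hξt hξt' hlt, prec_of_fract_scaledArg_lt ?_ ?_ hlt_rot⟩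
  · exact hrot t' ht' ▸ mul_ne_zero hw hξt'
  · exact hrot t ht ▸ mul_ne_zero hw hξt
end

section
/- Let N ≥ 3 be an integer, r ≥ 1, ξ : {1, ..., r+1} → ℂ \ {0}, and let ≺ be the relation defined by: t ≺ t' iff m(ξ(t')·ξ(t)⁻¹) ≡ m(ξ(t')) - m(ξ(t)) (mod N) and (m(ξ(t')·ξ(t)⁻¹) + m(ξ(t)·ξ(t')⁻¹) ≡ 1 (mod N) or t' < t). For each t define θ(t) := arg(ξ(t)·exp(2πi·m(ξ(t))/N)). Then t ≺ t' implies θ(t) ≤ θ(t'). -/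
/-- `θ(t) := arg(ξ(t)·exp(2πi·m(ξ(t))/N))`, with the argument taken in `[-π, π)`. -/
noncomputable def theta (N : ℤ) (ξ : ℕ → ℂ) (t : ℕ) : ℝ :=
  parg (ξ t * Complex.exp (2 * Real.pi * Complex.I * (mfun N (ξ t) : ℂ) / (N : ℂ)))

open Real Complex

lemma Real.Angle.eq_of_coe_eq_of_abs_sub_lt {x y : ℝ} (h : (x : Angle) = y)
    (hxy : |x - y| < 2 * π) : x = y := by
  obtain ⟨k, hk⟩ := Angle.angle_eq_iff_two_pi_dvd_sub.mp h
  have hk1 : |(k : ℝ)| < 1 := by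
    rw [hk, abs_mul, abs_of_pos two_pi_pos] at hxy
    exact (mul_lt_iff_lt_one_right two_pi_pos).mp hxy
  have hk0 : k = 0 := Int.abs_lt_one_iff.mp (by exact_mod_cast hk1)
  simpa [hk0, sub_eq_zero] using hk

lemma Real.Angle.coe_two_pi_mul_div_eq_of_modEq {N a b : ℤ} (hN : N ≠ 0) (h : a ≡ b [ZMOD N]) :
    ((2 * π * a / N : ℝ) : Angle) = (2 * π * b / N : ℝ) := by
  obtain ⟨k, hk⟩ := h.symm.dvd
  have hkR : (a : ℝ) - b = N * k := by exact_mod_cast hk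
  refine Angle.angle_eq_iff_two_pi_dvd_sub.mpr ⟨k, ?_⟩
  rw [← sub_div, ← mul_sub, hkR]
  field_simp

lemma parg_coe_angle_s17 (z : ℂ) : (parg z : Angle) = arg z := by
  unfold parg
  split_ifs with h
  · rw [h, Angle.coe_neg, Angle.neg_coe_pi]
  · rfl

lemma parg_mem_Ico (z : ℂ) : parg z ∈ Set.Ico (-π) π := by
  unfold parg
  split_ifs with h
  · exact ⟨le_rfl, by linarith [pi_pos]⟩
  · exact ⟨(neg_pi_lt_arg z).le, (arg_le_pi z).lt_of_ne h⟩

lemma parg_eq_of_coe_eq_s17 {z : ℂ} {θ : ℝ} (h : (θ : Angle) = arg z)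
    (hθ : θ ∈ Set.Ico (-π) π) : parg z = θ := by
  have hz := parg_mem_Ico z
  refine Angle.eq_of_coe_eq_of_abs_sub_lt (by rw [parg_coe_angle_s17, h]) ?_
  rw [abs_lt]
  constructor <;> linarith [hz.1, hz.2, hθ.1, hθ.2]

noncomputable def rotArg (N : ℤ) (z : ℂ) : ℝ :=
  parg z + 2 * π * mfun N z / N

lemma rotArg_mem_Ico {N : ℤ} (hN : 0 < N) (z : ℂ) : rotArg N z ∈ Set.Ico 0 (2 * π / N) := by
  have hNR : (0 : ℝ) < N := by exact_mod_cast hN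
  have hm₁ : -N * parg z / (2 * π) ≤ mfun N z := Int.le_ceil _
  have hm₂ : (mfun N z : ℝ) < -N * parg z / (2 * π) + 1 := Int.ceil_lt_add_one _
  rw [div_le_iff₀ two_pi_pos] at hm₁
  rw [← sub_lt_iff_lt_add, lt_div_iff₀ two_pi_pos] at hm₂
  unfold rotArg
  constructor
  · rw [← sub_nonneg]
    field_simp
    nlinarith
  · rw [← sub_pos]
    field_simp
    nlinarith

lemma coe_rotArg_of_modEq {N : ℤ} (hN : N ≠ 0) {z : ℂ} {k : ℤ} (h : mfun N z ≡ k [ZMOD N]) :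
    (rotArg N z : Angle) = arg z + (2 * π * k / N : ℝ) := by
  rw [rotArg, Angle.coe_add, parg_coe_angle_s17, Angle.coe_two_pi_mul_div_eq_of_modEq hN h]

lemma two_pi_div_le_pi {N : ℤ} (hN : 2 ≤ N) : 2 * π / N ≤ π := by
  have hNR : (2 : ℝ) ≤ N := by exact_mod_cast hN
  rw [div_le_iff₀ (by linarith)]
  nlinarith [pi_pos]

lemma theta_eq_rotArg {N : ℤ} (hN : 2 ≤ N) {ξ : ℕ → ℂ} {t : ℕ} (hξ : ξ t ≠ 0) :
    theta N ξ t = rotArg N (ξ t) := by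
  have hexp : 2 * π * I * (mfun N (ξ t) : ℂ) / N = ((2 * π * mfun N (ξ t) / N : ℝ) : ℂ) * I := by
    push_cast
    ring
  have hθ := rotArg_mem_Ico (N := N) (by omega) (ξ t)
  refine parg_eq_of_coe_eq_s17 ?_ ⟨by linarith [pi_pos, hθ.1], hθ.2.trans_le (two_pi_div_le_pi hN)⟩
  rw [hexp, arg_mul_coe_angle hξ (exp_ne_zero _), arg_exp_mul_I, Angle.coe_toIocMod,
    ← parg_coe_angle_s17, ← Angle.coe_add, rotArg]

lemma rotArg_mul_inv_eq_sub {N : ℤ} (hN : 2 ≤ N) {z z' : ℂ} (hz : z ≠ 0) (hz' : z' ≠ 0)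
    (h : mfun N (z' * z⁻¹) ≡ mfun N z' - mfun N z [ZMOD N]) :
    rotArg N (z' * z⁻¹) = rotArg N z' - rotArg N z := by
  have hN0 : N ≠ 0 := by omega
  refine Angle.eq_of_coe_eq_of_abs_sub_lt ?_ ?_
  · rw [coe_rotArg_of_modEq hN0 h, Angle.coe_sub, coe_rotArg_of_modEq hN0 rfl,
      coe_rotArg_of_modEq hN0 rfl, arg_mul_coe_angle hz' (inv_ne_zero hz), arg_inv_coe_angle]
    push_cast
    rw [mul_sub, sub_div, Angle.coe_sub]
    abel
  · have hw := rotArg_mem_Ico (N := N) (by omega) (z' * z⁻¹)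
    have h₁ := rotArg_mem_Ico (N := N) (by omega) z
    have h₂ := rotArg_mem_Ico (N := N) (by omega) z'
    rw [abs_lt]
    constructor <;> linarith [hw.1, hw.2, h₁.1, h₁.2, h₂.1, h₂.2, two_pi_div_le_pi hN]

theorem stmt17_general (N : ℤ) (hN : 3 ≤ N) (r : ℕ) (ξ : ℕ → ℂ)
    (hξ : ∀ s ∈ Finset.Icc 1 (r + 1), ξ s ≠ 0)
    (t t' : ℕ) (ht : t ∈ Finset.Icc 1 (r + 1)) (ht' : t' ∈ Finset.Icc 1 (r + 1))
    (h : prec N ξ t t') :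
    theta N ξ t ≤ theta N ξ t' := by
  have hN2 : 2 ≤ N := by omega
  have hz := hξ t ht
  have hz' := hξ t' ht'
  rw [theta_eq_rotArg hN2 hz, theta_eq_rotArg hN2 hz']
  have hadd := rotArg_mul_inv_eq_sub hN2 hz hz' h.1
  linarith [(rotArg_mem_Ico (N := N) (by omega) (ξ t' * (ξ t)⁻¹)).1]

theorem stmt17 (N : ℤ) (hN : 3 ≤ N) (r : ℕ) (hr : 1 ≤ r) (ξ : ℕ → ℂ)
    (hξ : ∀ s ∈ Finset.Icc 1 (r + 1), ξ s ≠ 0)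
    (t t' : ℕ) (ht : t ∈ Finset.Icc 1 (r + 1)) (ht' : t' ∈ Finset.Icc 1 (r + 1))
    (h : prec N ξ t t') :
    theta N ξ t ≤ theta N ξ t' :=
  stmt17_general N hN r ξ hξ t t' ht ht' h
end
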